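/- arXiv:2507.06190 — 3 statements merged into one kernel-verified Lean document; each statement's English description precedes it below -/
import Mathlib

section
/- Let h > 0, x ∈ ℝ, and let v : ℝ → ℝ be four times continuously differentiable on the interval [x − 2h, x + h], with M = sup over [x − 2h, x + h] of |v⁗|. Then |(v(x − 2h) − 6 v(x − h) + 3 v(x) + 2 v(x + h))/(6h) − v′(x)| ≤ (M/6) h³. -/
/-!
Expand `v` to third order about `x`, with Lagrange remainder `R`. The stencil reproduces the
derivative of a cubic exactly, so the error is `(R (x - 2h) - 6 R (x - h) + 2 R (x + h)) / (6h)`,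
and `|R (x + kh)| ≤ M |kh|⁴ / 4!` bounds it by `(16 + 6 + 2) / 24 · M h⁴ / (6h) = M h³ / 6`.
-/

open Set
open scoped Nat

theorem iteratedDerivWithin_subset {𝕜 F : Type*} [NontriviallyNormedField 𝕜]
    [NormedAddCommGroup F] [NormedSpace 𝕜 F] {f : 𝕜 → F} {s t : Set 𝕜} {x : 𝕜} {n : ℕ}
    (st : s ⊆ t) (hs : UniqueDiffOn 𝕜 s) (ht : UniqueDiffOn 𝕜 t) (hf : ContDiffOn 𝕜 n f t)
    (hx : x ∈ s) : iteratedDerivWithin n f s x = iteratedDerivWithin n f t x := by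
  simp only [iteratedDerivWithin, iteratedFDerivWithin_subset st hs ht hf hx]

theorem taylorWithinEval_subset {E : Type*} [NormedAddCommGroup E] [NormedSpace ℝ E]
    {f : ℝ → E} {s t : Set ℝ} {x₀ : ℝ} {n : ℕ}
    (st : s ⊆ t) (hs : UniqueDiffOn ℝ s) (ht : UniqueDiffOn ℝ t) (hf : ContDiffOn ℝ n f t)
    (hx₀ : x₀ ∈ s) (x : ℝ) : taylorWithinEval f n s x₀ x = taylorWithinEval f n t x₀ x := by
  simp only [taylor_within_apply]
  refine Finset.sum_congr rfl fun k hk => ?_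
  have hkn : (k : WithTop ℕ∞) ≤ n := by
    exact_mod_cast Nat.lt_succ_iff.mp (Finset.mem_range.mp hk)
  rw [iteratedDerivWithin_subset st hs ht (hf.of_le hkn) hx₀]

theorem abs_sub_taylorWithinEval_Icc_le {f : ℝ → ℝ} {a b C x₀ y : ℝ} {n : ℕ}
    (hf : ContDiffOn ℝ (n + 1) f (Icc a b)) (hx₀ : x₀ ∈ Icc a b) (hy : y ∈ Icc a b)
    (hC : ∀ z ∈ Icc a b, |iteratedDerivWithin (n + 1) f (Icc a b) z| ≤ C) :
    |f y - taylorWithinEval f n (Icc a b) x₀ y| ≤ C * |y - x₀| ^ (n + 1) / (n + 1)! := by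
  rcases eq_or_ne x₀ y with rfl | hne
  · simp [taylorWithinEval_self]
  have hsub : uIcc x₀ y ⊆ Icc a b := uIcc_subset_Icc hx₀ hy
  have hab : a < b := by
    by_contra! hba
    exact hne (subsingleton_Icc_of_ge hba hx₀ hy)
  -- Mathlib's Lagrange remainder is for the Taylor polynomial within `uIcc x₀ y`.
  obtain ⟨ξ, hξ, hrem⟩ := taylor_mean_remainder_lagrange_iteratedDeriv hne (hf.mono hsub)
  have hξab : ξ ∈ Ioo a b :=
    Ioo_subset_Ioo (le_inf hx₀.1 hy.1) (sup_le hx₀.2 hy.2) hξ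
  rw [← taylorWithinEval_subset hsub (uniqueDiffOn_uIcc hne) (uniqueDiffOn_Icc hab) hf.of_succ
    left_mem_uIcc, hrem, ← iteratedDerivWithin_eq_iteratedDeriv (uniqueDiffOn_Icc hab)
    (hf.contDiffAt (Icc_mem_nhds hξab.1 hξab.2)) (Ioo_subset_Icc_self hξab),
    abs_div, abs_mul, abs_pow, Nat.abs_cast]
  gcongr
  exact hC ξ (Ioo_subset_Icc_self hξab)

theorem taylorWithinEval_three (f : ℝ → ℝ) (s : Set ℝ) (x₀ y : ℝ) :
    taylorWithinEval f 3 s x₀ y = f x₀ + derivWithin f s x₀ * (y - x₀)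
      + iteratedDerivWithin 2 f s x₀ * (y - x₀) ^ 2 / 2
      + iteratedDerivWithin 3 f s x₀ * (y - x₀) ^ 3 / 6 := by
  simp only [taylor_within_apply, Finset.sum_range_succ, Finset.sum_range_zero,
    iteratedDerivWithin_zero, iteratedDerivWithin_one, smul_eq_mul]
  norm_num [Nat.factorial]
  ring

theorem stencil_taylorWithinEval_three (f : ℝ → ℝ) (s : Set ℝ) (x h : ℝ) :
    taylorWithinEval f 3 s x (x - 2 * h) - 6 * taylorWithinEval f 3 s x (x - h)
      + 3 * taylorWithinEval f 3 s x x + 2 * taylorWithinEval f 3 s x (x + h)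
      = 6 * h * derivWithin f s x := by
  simp only [taylorWithinEval_three]
  ring

theorem conservative_flux_difference_third_order
    (h x : ℝ) (hh : 0 < h) (v : ℝ → ℝ) (M : ℝ)
    (hv : ContDiffOn ℝ 4 v (Set.Icc (x - 2 * h) (x + h)))
    (hM : ∀ y ∈ Set.Icc (x - 2 * h) (x + h),
      |iteratedDerivWithin 4 v (Set.Icc (x - 2 * h) (x + h)) y| ≤ M) :
    |(v (x - 2 * h) - 6 * v (x - h) + 3 * v x + 2 * v (x + h)) / (6 * h)
      - derivWithin v (Set.Icc (x - 2 * h) (x + h)) x| ≤ (M / 6) * h ^ 3 := by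
  set s := Icc (x - 2 * h) (x + h)
  set R : ℝ → ℝ := fun y => v y - taylorWithinEval v 3 s x y
  have hR : ∀ y ∈ s, |R y| ≤ M * |y - x| ^ 4 / 24 := fun y hy =>
    abs_sub_taylorWithinEval_Icc_le (n := 3) hv ⟨by linarith, by linarith⟩ hy hM
  have h₁ : |R (x - 2 * h)| ≤ M * (2 * h) ^ 4 / 24 := by
    simpa [abs_of_pos hh] using hR (x - 2 * h) ⟨by linarith, by linarith⟩
  have h₂ : |R (x - h)| ≤ M * h ^ 4 / 24 := by
    simpa [abs_of_pos hh] using hR (x - h) ⟨by linarith, by linarith⟩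
  have h₃ : |R (x + h)| ≤ M * h ^ 4 / 24 := by
    simpa [abs_of_pos hh] using hR (x + h) ⟨by linarith, by linarith⟩
  have hnum : v (x - 2 * h) - 6 * v (x - h) + 3 * v x + 2 * v (x + h)
      = R (x - 2 * h) - 6 * R (x - h) + 2 * R (x + h) + 6 * h * derivWithin v s x := by
    have := stencil_taylorWithinEval_three v s x h
    rw [taylorWithinEval_self] at this
    linear_combination this
  have h6h : 0 < 6 * h := by linarith
  rw [hnum, add_div, mul_div_cancel_left₀ _ h6h.ne', add_sub_cancel_right, abs_div,
    abs_of_pos h6h, div_le_iff₀ h6h, abs_le]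
  constructor <;> linarith [abs_le.1 h₁, abs_le.1 h₂, abs_le.1 h₃]
end

section
/- Let h > 0, x ∈ ℝ, and let g : ℝ → ℝ be three times continuously differentiable on the interval [x − 3h/2, x + 3h/2], with M = sup over [x − 3h/2, x + 3h/2] of |g‴|. Define v(y) = (1/h) ∫_{y−h/2}^{y+h/2} g(ξ) dξ. Then |(−(1/6) v(x − h) + (5/6) v(x) + (1/3) v(x + h)) − g(x + h/2)| ≤ (1/6) M h³. -/
/-!
Write `c = x + h / 2` for the cell face and `G y = ∫_c^y g` for a primitive of `g`. The three cell
averages are difference quotients of `G`, so the reconstruction equals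
`(G (c - 2h) / 6 - G (c - h) + G c / 2 + G (c + h) / 3) / h`, a one-sided difference formula for
`G' c = g c` that is exact for cubics. Replacing `g` by its quadratic Taylor polynomial at `c` thus
changes nothing but the primitive's remainder `e`, and the Lagrange bound
`|g - T₂ g| ≤ M |t - c|³ / 6` integrates to `|e y| ≤ M |y - c|⁴ / 24`. Hence the error is at most
`(16 / 6 + 1 + 1 / 3) M h⁴ / (24 h) = M h³ / 6`.
-/

open MeasureTheory intervalIntegral Set

open scoped Nat

theorem continuous_taylorWithinEval {E : Type*} [NormedAddCommGroup E] [NormedSpace ℝ E]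
    (f : ℝ → E) (n : ℕ) (s : Set ℝ) (x₀ : ℝ) :
    Continuous fun x => taylorWithinEval f n s x₀ x := by
  simp only [taylor_within_apply]
  fun_prop

theorem abs_integral_le_of_abs_le_mul_abs_sub_pow {f : ℝ → ℝ} {c y K : ℝ} (n : ℕ)
    (hf : IntervalIntegrable f volume c y) (hK : ∀ t ∈ uIoc c y, |f t| ≤ K * |t - c| ^ n) :
    |∫ t in c..y, f t| ≤ K * |y - c| ^ (n + 1) / (n + 1) :=
  calc |∫ t in c..y, f t| ≤ ∫ t in uIoc c y, |f t| :=
      norm_integral_le_integral_norm_uIoc (f := f)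
    _ ≤ ∫ t in uIoc c y, K * |t - c| ^ n :=
      setIntegral_mono_on hf.def'.abs (Continuous.integrableOn_uIoc (by fun_prop))
        measurableSet_uIoc hK
    _ = K * |y - c| ^ (n + 1) / (n + 1) := by
      rw [MeasureTheory.integral_const_mul, integral_pow_abs_sub_uIoc, mul_div_assoc]

section Taylor

variable {f : ℝ → ℝ} {a b c x M : ℝ} {n : ℕ}

theorem taylorWithinEval_eq_of_contDiffAt {s t : Set ℝ} (hs : UniqueDiffOn ℝ s)
    (ht : UniqueDiffOn ℝ t) (hcs : c ∈ s) (hct : c ∈ t) (hf : ContDiffAt ℝ n f c) (x : ℝ) :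
    taylorWithinEval f n s c x = taylorWithinEval f n t c x := by
  simp only [taylor_within_apply]
  refine Finset.sum_congr rfl fun k hk => ?_
  have hfk : ContDiffAt ℝ k f c := hf.of_le (mod_cast Finset.mem_range_succ_iff.mp hk)
  rw [iteratedDerivWithin_eq_iteratedDeriv hs hfk hcs,
    iteratedDerivWithin_eq_iteratedDeriv ht hfk hct]

-- Lagrange's remainder applied on `uIcc c x`, whose Taylor polynomial at the interior point `c`
-- coincides with the one taken within `Icc a b`.
theorem abs_sub_taylorWithinEval_le (hf : ContDiffOn ℝ (n + 1) f (Icc a b)) (hc : c ∈ Ioo a b)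
    (hx : x ∈ Icc a b) (hM : ∀ y ∈ Icc a b, |iteratedDerivWithin (n + 1) f (Icc a b) y| ≤ M) :
    |f x - taylorWithinEval f n (Icc a b) c x| ≤ M * |x - c| ^ (n + 1) / (n + 1)! := by
  rcases eq_or_ne c x with rfl | hcx
  · simp [taylorWithinEval_self]
  have hab : UniqueDiffOn ℝ (Icc a b) := uniqueDiffOn_Icc (hc.1.trans hc.2)
  obtain ⟨y, hy, hrem⟩ := taylor_mean_remainder_lagrange_iteratedDeriv hcx
    (hf.mono (uIcc_subset_Icc (Ioo_subset_Icc_self hc) hx))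
  have hy : y ∈ Ioo a b :=
    ⟨(le_inf hc.1.le hx.1).trans_lt hy.1, hy.2.trans_le (sup_le hc.2.le hx.2)⟩
  have hfc : ContDiffAt ℝ n f c :=
    (hf.contDiffAt (Icc_mem_nhds hc.1 hc.2)).of_le (by norm_cast; omega)
  rw [taylorWithinEval_eq_of_contDiffAt hab (uniqueDiffOn_uIcc hcx) (Ioo_subset_Icc_self hc)
    left_mem_uIcc hfc, hrem, ← iteratedDerivWithin_eq_iteratedDeriv hab
    (hf.contDiffAt (Icc_mem_nhds hy.1 hy.2)) (Ioo_subset_Icc_self hy),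
    abs_div, abs_mul, abs_pow, Nat.abs_cast]
  gcongr
  exact hM y (Ioo_subset_Icc_self hy)

theorem integral_taylorWithinEval (s : Set ℝ) (c y : ℝ) :
    ∫ t in c..y, taylorWithinEval f n s c t =
      ∑ k ∈ Finset.range (n + 1), (y - c) ^ (k + 1) / (k + 1)! * iteratedDerivWithin k f s c := by
  simp only [taylor_within_apply, smul_eq_mul]
  rw [integral_finsetSum fun k _ => (by fun_prop : Continuous _).intervalIntegrable _ _]
  refine Finset.sum_congr rfl fun k _ => ?_
  simp only [mul_assoc, intervalIntegral.integral_const_mul, intervalIntegral.integral_mul_const,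
    integral_comp_sub_right (· ^ k), integral_pow, sub_self]
  rw [Nat.factorial_succ]
  push_cast
  field_simp
  ring

theorem abs_integral_sub_integral_taylorWithinEval_le (hf : ContDiffOn ℝ (n + 1) f (Icc a b))
    (hc : c ∈ Ioo a b) (hx : x ∈ Icc a b)
    (hM : ∀ y ∈ Icc a b, |iteratedDerivWithin (n + 1) f (Icc a b) y| ≤ M) :
    |(∫ t in c..x, f t) - ∫ t in c..x, taylorWithinEval f n (Icc a b) c t| ≤
      M * |x - c| ^ (n + 2) / (n + 2)! := by
  have hcx : uIcc c x ⊆ Icc a b := uIcc_subset_Icc (Ioo_subset_Icc_self hc) hx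
  have hfi : IntervalIntegrable f volume c x := (hf.continuousOn.mono hcx).intervalIntegrable
  rw [← integral_sub hfi ((continuous_taylorWithinEval _ _ _ _).intervalIntegrable _ _)]
  refine (abs_integral_le_of_abs_le_mul_abs_sub_pow (K := M / (n + 1)!) (n + 1)
    (hfi.sub ((continuous_taylorWithinEval _ _ _ _).intervalIntegrable _ _)) fun t ht =>
      (abs_sub_taylorWithinEval_le hf hc (hcx (uIoc_subset_uIcc ht)) hM).trans_eq
        (by ring)).trans_eq ?_
  rw [Nat.factorial_succ (n + 1)]
  push_cast
  field_simp

end Taylor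

theorem abs_weno3_stencil_le {e : ℝ → ℝ} {h x K : ℝ} (hh : 0 < h)
    (he : ∀ y ∈ Icc (x - 3 * h / 2) (x + 3 * h / 2), |e y| ≤ K * |y - (x + h / 2)| ^ 4) :
    |(e (x - 3 * h / 2) / 6 - e (x - h / 2) + e (x + h / 2) / 2 + e (x + 3 * h / 2) / 3) / h| ≤
      4 * K * h ^ 3 := by
  have bound : ∀ k ∈ Icc (-2 : ℝ) 1, |e (x + h / 2 + k * h)| ≤ K * |k| ^ 4 * h ^ 4 := by
    intro k hk
    have hmem : x + h / 2 + k * h ∈ Icc (x - 3 * h / 2) (x + 3 * h / 2) := by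
      constructor <;> nlinarith [hk.1, hk.2]
    simpa [abs_mul, abs_of_pos hh, mul_pow, mul_assoc] using he _ hmem
  have e₁ := abs_le.mp (bound (-2) (by norm_num))
  have e₂ := abs_le.mp (bound (-1) (by norm_num))
  have e₃ := abs_le.mp (bound 0 (by norm_num))
  have e₄ := abs_le.mp (bound 1 (by norm_num))
  norm_num at e₁ e₂ e₃ e₄
  rw [abs_div, abs_of_pos hh, div_le_iff₀ hh, abs_le]
  ring_nf at e₁ e₂ e₃ e₄ ⊢
  constructor <;> linarith

theorem weno3_linear_reconstruction_third_order
    (h x : ℝ) (hh : 0 < h) (g : ℝ → ℝ) (M : ℝ)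
    (hg : ContDiffOn ℝ 3 g (Set.Icc (x - 3 * h / 2) (x + 3 * h / 2)))
    (hM : ∀ y ∈ Set.Icc (x - 3 * h / 2) (x + 3 * h / 2),
      |iteratedDerivWithin 3 g (Set.Icc (x - 3 * h / 2) (x + 3 * h / 2)) y| ≤ M)
    (v : ℝ → ℝ)
    (hv : ∀ y : ℝ, v y = (1 / h) * ∫ ξ in (y - h / 2)..(y + h / 2), g ξ) :
    |(-(1 / 6) * v (x - h) + (5 / 6) * v x + (1 / 3) * v (x + h)) - g (x + h / 2)|
      ≤ (1 / 6) * M * h ^ 3 := by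
  have hc : x + h / 2 ∈ Ioo (x - 3 * h / 2) (x + 3 * h / 2) := ⟨by linarith, by linarith⟩
  set S := Icc (x - 3 * h / 2) (x + 3 * h / 2)
  set G : ℝ → ℝ := fun y => ∫ t in (x + h / 2)..y, g t
  have hgi : ∀ y ∈ S, IntervalIntegrable g volume (x + h / 2) y := fun y hy =>
    (hg.continuousOn.mono (uIcc_subset_Icc (Ioo_subset_Icc_self hc) hy)).intervalIntegrable
  have hcell : ∀ a ∈ S, ∀ b ∈ S, ∫ t in a..b, g t = G b - G a := fun a ha b hb =>
    (integral_interval_sub_left (hgi b hb) (hgi a ha)).symm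
  rw [hv, hv, hv, show x - h - h / 2 = x - 3 * h / 2 by ring,
    show x - h + h / 2 = x - h / 2 by ring, show x + h - h / 2 = x + h / 2 by ring,
    show x + h + h / 2 = x + 3 * h / 2 by ring,
    hcell _ ⟨by linarith, by linarith⟩ _ ⟨by linarith, by linarith⟩,
    hcell _ ⟨by linarith, by linarith⟩ _ ⟨by linarith, by linarith⟩,
    hcell _ ⟨by linarith, by linarith⟩ _ ⟨by linarith, by linarith⟩]
  set e : ℝ → ℝ := fun y => G y - ∫ t in (x + h / 2)..y, taylorWithinEval g 2 S (x + h / 2) t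
  -- the stencil is exact on the primitive of the Taylor polynomial
  calc _ = |(e (x - 3 * h / 2) / 6 - e (x - h / 2) + e (x + h / 2) / 2
          + e (x + 3 * h / 2) / 3) / h| := by
        congr 1
        simp only [e, G, integral_same, integral_taylorWithinEval, Finset.sum_range_succ,
          Finset.sum_range_zero, iteratedDerivWithin_zero]
        field_simp
        ring
    _ ≤ 4 * (M / 24) * h ^ 3 := abs_weno3_stencil_le hh fun y hy =>
        (abs_integral_sub_integral_taylorWithinEval_le hg hc hy hM).trans_eq
          (by norm_num [Nat.factorial]; ring)
    _ = 1 / 6 * M * h ^ 3 := by ring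
end

section
/- Let (f₀, f₁, f₂) ∈ ℝ³ and ε > 0, and let (ω₀, ω₁) be the WENO3-JS nonlinear weights of (f₀, f₁, f₂). Then the WENO3-JS nonlinear weights of the flipped stencil (f₂, f₁, f₀) equal (ω₁/(4ω₀ + ω₁), 4ω₀/(4ω₀ + ω₁)). -/
/-- WENO3-JS nonlinear weights of the three-point stencil `(f₀, f₁, f₂)`
with regularization parameter `ε`. -/
noncomputable def jsWeights (ε f0 f1 f2 : ℝ) : ℝ × ℝ :=
  let β0 := (f0 - f1) ^ 2
  let β1 := (f1 - f2) ^ 2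
  let α0 := (1 / 3) / (β0 + ε) ^ 2
  let α1 := (2 / 3) / (β1 + ε) ^ 2
  (α0 / (α0 + α1), α1 / (α0 + α1))

lemma jsW1 (a b : ℝ) (ha : a ≠ 0) (hb : b ≠ 0) :
    (1 / 3) / a ^ 2 / ((1 / 3) / a ^ 2 + (2 / 3) / b ^ 2) = b ^ 2 / (b ^ 2 + 2 * a ^ 2) := by
  have hs : b ^ 2 + 2 * a ^ 2 ≠ 0 := by positivity
  field_simp

lemma jsW2 (a b : ℝ) (ha : a ≠ 0) (hb : b ≠ 0) :
    (2 / 3) / b ^ 2 / ((1 / 3) / a ^ 2 + (2 / 3) / b ^ 2) = 2 * a ^ 2 / (b ^ 2 + 2 * a ^ 2) := by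
  have hs : b ^ 2 + 2 * a ^ 2 ≠ 0 := by positivity
  field_simp

theorem jsWeights_flip_symmetry (f0 f1 f2 ε : ℝ) (hε : 0 < ε) :
    jsWeights ε f2 f1 f0 =
      ((jsWeights ε f0 f1 f2).2 / (4 * (jsWeights ε f0 f1 f2).1 + (jsWeights ε f0 f1 f2).2),
       4 * (jsWeights ε f0 f1 f2).1 / (4 * (jsWeights ε f0 f1 f2).1 + (jsWeights ε f0 f1 f2).2)) := by
  have ha : ((f0 - f1) ^ 2 + ε) ≠ 0 := by positivity
  have hb : ((f1 - f2) ^ 2 + ε) ≠ 0 := by positivity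
  set a := (f0 - f1) ^ 2 + ε with hA
  set b := (f1 - f2) ^ 2 + ε with hB
  have h1 : (f2 - f1) ^ 2 + ε = b := by rw [hB]; ring
  have h2 : (f1 - f0) ^ 2 + ε = a := by rw [hA]; ring
  simp only [jsWeights, h1, h2]
  rw [jsW1 a b ha hb, jsW2 a b ha hb, jsW1 b a hb ha, jsW2 b a hb ha]
  have hs : b ^ 2 + 2 * a ^ 2 ≠ 0 := by positivity
  have hs' : a ^ 2 + 2 * b ^ 2 ≠ 0 := by positivity
  have hden : 4 * (b ^ 2 / (b ^ 2 + 2 * a ^ 2)) + 2 * a ^ 2 / (b ^ 2 + 2 * a ^ 2)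
      = (4 * b ^ 2 + 2 * a ^ 2) / (b ^ 2 + 2 * a ^ 2) := by
    field_simp
  have hden' : (4 * b ^ 2 + 2 * a ^ 2) ≠ 0 := by positivity
  rw [hden]
  refine Prod.ext ?_ ?_ <;> simp only
  · rw [div_div_div_cancel_right₀ hs, div_eq_div_iff hs' hden']; ring
  · rw [← mul_div_assoc, div_div_div_cancel_right₀ hs, div_eq_div_iff hs' hden']; ring
end
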